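/- arXiv:1702.08173 — 9 statements merged into one kernel-verified Lean document; each statement's English description precedes it below -/
import Mathlib

section
/- Let G be a torsion group and let i and j be involutions in G. Then either there exists an involution k in G commuting with both i and j, or there exists a nontrivial element z in G such that z⁻¹·j·z = i and z² = j·i. -/
/-!
With `t := j * i`, both involutions invert `t` by conjugation, hence invert every power of `t`.
If `t` has even order `2m`, the involution `t ^ m` is inverted, i.e. fixed, by `i` and `j`.
If `t` has odd order `2m + 1`, then `z := t ^ (m + 1)` is a square root of `t` inverted by `j`,
so `z⁻¹ * j * z = z⁻² * j = t⁻¹ * j = i`.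
-/

section

variable {G : Type*} [Group G] {a b c x : G}

theorem inv_eq_self_of_sq_eq_one (ha : a ^ 2 = 1) : a⁻¹ = a :=
  inv_eq_of_mul_eq_one_left (by rwa [← sq])

theorem semiconjBy_mul_inv_of_sq_eq_one_left (ha : a ^ 2 = 1) (hb : b ^ 2 = 1) :
    SemiconjBy a (b * a) (b * a)⁻¹ := by
  rw [SemiconjBy, mul_inv_rev, inv_eq_self_of_sq_eq_one ha, inv_eq_self_of_sq_eq_one hb,
    mul_assoc]

theorem semiconjBy_mul_inv_of_sq_eq_one_right (ha : a ^ 2 = 1) (hb : b ^ 2 = 1) :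
    SemiconjBy b (b * a) (b * a)⁻¹ := by
  rw [SemiconjBy, mul_inv_rev, inv_eq_self_of_sq_eq_one ha, inv_mul_cancel_right, ← mul_assoc,
    ← sq, hb, one_mul]

theorem SemiconjBy.pow_right_inv (h : SemiconjBy c x x⁻¹) (n : ℕ) :
    SemiconjBy c (x ^ n) (x ^ n)⁻¹ := by
  rw [← inv_pow]; exact h.pow_right n

theorem SemiconjBy.commute_of_sq_eq_one (h : SemiconjBy c x x⁻¹) (hx : x ^ 2 = 1) :
    Commute c x := by
  rwa [inv_eq_self_of_sq_eq_one hx] at h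

theorem SemiconjBy.inv_mul_mul_eq (h : SemiconjBy c x x⁻¹) : x⁻¹ * c * x = (x ^ 2)⁻¹ * c := by
  rw [mul_assoc, h.eq, sq, mul_inv_rev, mul_assoc]

theorem pow_ne_one_and_sq_eq_one_of_orderOf_eq_two_mul {m : ℕ} (hm : m ≠ 0)
    (h : orderOf x = 2 * m) : x ^ m ≠ 1 ∧ (x ^ m) ^ 2 = 1 :=
  ⟨pow_ne_one_of_lt_orderOf hm (by omega), by rw [← pow_mul, mul_comm, ← h, pow_orderOf_eq_one]⟩

theorem sq_pow_succ_eq_self_of_orderOf_eq_two_mul_add_one {m : ℕ} (h : orderOf x = 2 * m + 1) :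
    (x ^ (m + 1)) ^ 2 = x := by
  rw [← pow_mul, show (m + 1) * 2 = orderOf x + 1 by omega, pow_succ, pow_orderOf_eq_one, one_mul]

end

theorem involutions_commuting_or_conjugating_general {G : Type*} [Group G]
    (hG : Monoid.IsTorsion G) (i j : G)
    (hi2 : i ^ 2 = 1) (hj1 : j ≠ 1) (hj2 : j ^ 2 = 1) :
    (∃ k : G, k ≠ 1 ∧ k ^ 2 = 1 ∧ Commute k i ∧ Commute k j) ∨
    (∃ z : G, z ≠ 1 ∧ z⁻¹ * j * z = i ∧ z ^ 2 = j * i) := by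
  by_cases ht : j * i = 1
  · have hij : i = j := (mul_eq_one_iff_eq_inv'.mp ht).trans (inv_eq_self_of_sq_eq_one hj2)
    exact Or.inl ⟨j, hj1, hj2, hij ▸ Commute.refl i, Commute.refl j⟩
  have hi := semiconjBy_mul_inv_of_sq_eq_one_left hi2 hj2
  have hj := semiconjBy_mul_inv_of_sq_eq_one_right hi2 hj2
  obtain ⟨m, hm | hm⟩ := Nat.even_or_odd' (orderOf (j * i))
  · have hm0 : m ≠ 0 := by have := (hG (j * i)).orderOf_pos; omega
    obtain ⟨hk1, hk2⟩ := pow_ne_one_and_sq_eq_one_of_orderOf_eq_two_mul hm0 hm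
    refine Or.inl ⟨_, hk1, hk2, ?_, ?_⟩
    · exact ((hi.pow_right_inv m).commute_of_sq_eq_one hk2).symm
    · exact ((hj.pow_right_inv m).commute_of_sq_eq_one hk2).symm
  · have hz2 := sq_pow_succ_eq_self_of_orderOf_eq_two_mul_add_one hm
    refine Or.inr ⟨(j * i) ^ (m + 1), fun hz ↦ ht (by rw [← hz2, hz, one_pow]), ?_, hz2⟩
    rw [(hj.pow_right_inv (m + 1)).inv_mul_mul_eq,
      hz2, mul_inv_rev, inv_mul_cancel_right, inv_eq_self_of_sq_eq_one hi2]

/-- In any torsion group, for any two involutions `i` and `j`, either there is an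
involution commuting with both, or there is a nontrivial element `z` with
`z⁻¹ * j * z = i` and `z ^ 2 = j * i`. -/
theorem involutions_commuting_or_conjugating {G : Type*} [Group G]
    (hG : Monoid.IsTorsion G) (i j : G)
    (hi1 : i ≠ 1) (hi2 : i ^ 2 = 1) (hj1 : j ≠ 1) (hj2 : j ^ 2 = 1) :
    (∃ k : G, k ≠ 1 ∧ k ^ 2 = 1 ∧ Commute k i ∧ Commute k j) ∨
    (∃ z : G, z ≠ 1 ∧ z⁻¹ * j * z = i ∧ z ^ 2 = j * i) :=
  involutions_commuting_or_conjugating_general hG i j hi2 hj1 hj2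
end

section
/- For every natural number n there exists a natural number N such that every finite simple group containing an involution whose centralizer has order at most n has order at most N. (Equivalently, there are only finitely many finite simple groups containing an involution with centralizer of a given finite size.) -/
/-!
Brauer–Fowler counting. Let `i` be a non-central involution of a finite group `G`, `n = |C(i)|`,
and `t` the number of involutions. The conjugacy class of `i` gives `|G| ≤ n t` and `t ≥ 2`.
An ordered pair `(j, k)` of distinct involutions is determined by `x = j k ≠ 1` and by `j`,
which inverts `x` and so ranges over a coset of `C(x)`; hence `t (t - 1) ≤ (|G| - 1) |C(x)|`
for some `x ≠ 1`, and therefore `|G : C(x)| < 2 n²`. In a nonabelian simple group `C(x)` is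
proper, so `G` acts faithfully on its cosets and `|G| ≤ (2 n²)!`. An abelian simple group
equals `C(i)`.
-/

open Finset

namespace Subgroup

variable {G : Type*} [Group G]

theorem index_normalCore_dvd_factorial_index (H : Subgroup G) [H.FiniteIndex] :
    H.normalCore.index ∣ H.index.factorial := by
  rw [normalCore_eq_ker, index_ker, index_eq_card, ← Nat.card_perm]
  exact card_subgroup_dvd_card _

theorem card_dvd_factorial_index_of_ne_top [IsSimpleGroup G] [Finite G] {H : Subgroup G}
    (hH : H ≠ ⊤) : Nat.card G ∣ H.index.factorial := by
  have hcore : H.normalCore = ⊥ :=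
    (IsSimpleGroup.eq_bot_or_eq_top_of_normal _ H.normalCore_normal).resolve_right
      fun h ↦ hH (top_le_iff.mp (h ▸ H.normalCore_le))
  simpa [hcore] using H.index_normalCore_dvd_factorial_index

theorem centralizer_singleton_ne_top_of_center_eq_bot (hZ : center G = ⊥) {x : G} (hx : x ≠ 1) :
    centralizer {x} ≠ ⊤ := by
  rw [Ne, centralizer_eq_top_iff_subset, Set.singleton_subset_iff, hZ]
  simpa using hx

end Subgroup

section Involutions

variable (G : Type*) [Group G] [Fintype G] [DecidableEq G]

def involutions : Finset G :=
  univ.filter fun j ↦ j ≠ 1 ∧ j ^ 2 = 1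

variable {G}

@[simp]
theorem mem_involutions {j : G} : j ∈ involutions G ↔ j ≠ 1 ∧ j ^ 2 = 1 := by
  simp [involutions]

theorem inv_eq_self_of_mem_involutions {j : G} (hj : j ∈ involutions G) : j⁻¹ = j :=
  inv_eq_of_mul_eq_one_right (by rw [← sq, (mem_involutions.mp hj).2])

theorem conj_mem_involutions {j : G} (hj : j ∈ involutions G) (a : G) :
    a * j * a⁻¹ ∈ involutions G := by
  simpa [conj_pow] using hj

theorem card_filter_conj_eq_le_card_centralizer (x y : G) :
    #{a | a * x * a⁻¹ = y} ≤ Nat.card (Subgroup.centralizer {x}) := by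
  obtain hempty | ⟨a₀, ha₀⟩ :=
    (univ.filter fun a ↦ a * x * a⁻¹ = y).eq_empty_or_nonempty
  · simp [hempty]
  · simp only [mem_filter, mem_univ, true_and] at ha₀
    have mem_centralizer {a : G} (ha : a * x * a⁻¹ = y) :
        a₀⁻¹ * a ∈ Subgroup.centralizer {x} := by
      have hax : a * x = y * a := by rw [← ha]; group
      have hy : a₀⁻¹ * y = x * a₀⁻¹ := by rw [← ha₀]; group
      rw [Subgroup.mem_centralizer_singleton_iff, mul_assoc, hax, ← mul_assoc, hy, mul_assoc]
    calc #{a | a * x * a⁻¹ = y}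
        = Nat.card {a // a ∈ univ.filter fun a ↦ a * x * a⁻¹ = y} :=
          (Nat.card_eq_finsetCard _).symm
      _ ≤ Nat.card (Subgroup.centralizer {x}) :=
        Nat.card_le_card_of_injective
          (fun a ↦ ⟨a₀⁻¹ * a.1, mem_centralizer (mem_filter.mp a.2).2⟩)
          fun a b h ↦ Subtype.ext (mul_left_cancel (congrArg Subtype.val h))

theorem index_centralizer_le_card_involutions {i : G} (hi : i ∈ involutions G) :
    (Subgroup.centralizer {i}).index ≤ #(involutions G) := by
  have hindex :
      (Subgroup.centralizer {i}).index = (MulAction.stabilizer (ConjAct G) i).index := by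
    rw [Subgroup.centralizer_eq_comap_stabilizer]
    exact Subgroup.index_comap_of_surjective _ ConjAct.toConjAct.surjective
  rw [hindex, MulAction.index_stabilizer, ← Set.ncard_coe_finset]
  refine Set.ncard_le_ncard ?_ (finite_toSet _)
  rintro _ ⟨a, rfl⟩
  exact conj_mem_involutions hi (ConjAct.ofConjAct a)

theorem card_involutions_mul_pred_le :
    #(involutions G) * (#(involutions G) - 1) ≤
      ∑ x ∈ univ.erase (1 : G), #{a | a * x * a⁻¹ = x⁻¹} := by
  rw [← card_sigma, Nat.mul_sub_one, ← offDiag_card]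
  -- Two distinct involutions `j ≠ k` both invert `x = j * k`, and `x` and `j` recover `k`.
  refine card_le_card_of_injOn (fun p ↦ ⟨p.1 * p.2, p.1⟩) ?_ ?_
  · rintro ⟨j, k⟩ hjk
    simp only [coe_offDiag] at hjk
    obtain ⟨hj, hk, hne⟩ := hjk
    have hj' := inv_eq_self_of_mem_involutions hj
    have hk' := inv_eq_self_of_mem_involutions hk
    simp only [coe_sigma, Set.mem_sigma_iff, mem_coe, mem_erase, mem_univ, and_true, mem_filter,
      true_and, mul_inv_rev, hj', hk']
    refine ⟨fun h ↦ hne ?_, ?_⟩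
    · rw [mul_eq_one_iff_eq_inv.mp h, hk']
    · rw [← mul_assoc, ← sq, (mem_involutions.mp hj).2, one_mul]
  · rintro ⟨j, k⟩ - ⟨j', k'⟩ - h
    obtain ⟨hmul, hj⟩ := Sigma.mk.inj_iff.mp h
    obtain rfl : j = j' := eq_of_heq hj
    obtain rfl : k = k' := mul_left_cancel hmul
    rfl

theorem exists_ne_one_index_centralizer_lt {i : G} (hi : i ∈ involutions G)
    (hC : Subgroup.centralizer {i} ≠ ⊤) :
    ∃ x : G, x ≠ 1 ∧
      (Subgroup.centralizer {x}).index < 2 * Nat.card (Subgroup.centralizer {i}) ^ 2 := by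
  set t := #(involutions G)
  set n := Nat.card (Subgroup.centralizer {i})
  have hgn : Nat.card G ≤ n * t :=
    (Subgroup.card_mul_index _).symm.trans_le
      (Nat.mul_le_mul_left n (index_centralizer_le_card_involutions hi))
  have ht : 2 ≤ t := (Subgroup.one_lt_index_of_ne_top hC).trans_le
    (index_centralizer_le_card_involutions hi)
  obtain ⟨x, hx, hmax⟩ := (univ.erase (1 : G)).exists_max_image
    (fun y ↦ Nat.card (Subgroup.centralizer {y}))
    ⟨i, mem_erase.mpr ⟨(mem_involutions.mp hi).1, mem_univ _⟩⟩
  set c := Nat.card (Subgroup.centralizer {x})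
  have hpairs : t * (t - 1) ≤ (Nat.card G - 1) * c := calc
    t * (t - 1) ≤ ∑ y ∈ univ.erase (1 : G), #{a | a * y * a⁻¹ = y⁻¹} :=
      card_involutions_mul_pred_le
    _ ≤ ∑ y ∈ univ.erase (1 : G), Nat.card (Subgroup.centralizer {y}) :=
      sum_le_sum fun y _ ↦ card_filter_conj_eq_le_card_centralizer y y⁻¹
    _ ≤ #(univ.erase (1 : G)) • c := sum_le_card_nsmul _ _ _ hmax
    _ = (Nat.card G - 1) * c := by
      rw [card_erase_of_mem (mem_univ _), card_univ, Nat.card_eq_fintype_card, smul_eq_mul]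
  have hg : 0 < Nat.card G := Nat.card_pos
  have hgc : Nat.card G < 2 * n ^ 2 * c := by
    refine Nat.lt_of_mul_lt_mul_left (a := Nat.card G) ?_
    calc Nat.card G * Nat.card G ≤ (n * t) * (n * t) := Nat.mul_le_mul hgn hgn
      _ = n ^ 2 * (t * t) := by ring
      _ ≤ n ^ 2 * (t * (2 * (t - 1))) := by gcongr; omega
      _ = n ^ 2 * (2 * (t * (t - 1))) := by ring
      _ ≤ n ^ 2 * (2 * ((Nat.card G - 1) * c)) := by gcongr
      _ = (Nat.card G - 1) * (2 * n ^ 2 * c) := by ring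
      _ < Nat.card G * (2 * n ^ 2 * c) := by
        have : 0 < n := Nat.card_pos
        have : 0 < c := Nat.card_pos
        gcongr
        omega
  refine ⟨x, (mem_erase.mp hx).1, Nat.lt_of_mul_lt_mul_left (a := c) ?_⟩
  rwa [Subgroup.card_mul_index, mul_comm]

end Involutions

/-- There are only finitely many finite simple groups containing an involution with
centralizer of a given finite size: their orders are uniformly bounded. -/
theorem finite_simple_groups_involution_centralizer_bounded (n : ℕ) :
    ∃ N : ℕ, ∀ (G : Type) [Group G] [Finite G], IsSimpleGroup G →
      (∃ i : G, i ≠ 1 ∧ i ^ 2 = 1 ∧ Nat.card (Subgroup.centralizer ({i} : Set G)) ≤ n) →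
      Nat.card G ≤ N := by
  use (2 * n ^ 2).factorial
  rintro G _ _ _ ⟨i, hi1, hi2, hn⟩
  classical
  have := Fintype.ofFinite G
  rcases IsSimpleGroup.eq_bot_or_eq_top_of_normal (Subgroup.center G) inferInstance with hZ | hZ
  · obtain ⟨x, hx1, hx⟩ :=
      exists_ne_one_index_centralizer_lt (mem_involutions.mpr ⟨hi1, hi2⟩)
      (Subgroup.centralizer_singleton_ne_top_of_center_eq_bot hZ hi1)
    have hG : Nat.card G ∣ (Subgroup.centralizer {x}).index.factorial :=
      Subgroup.card_dvd_factorial_index_of_ne_top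
        (Subgroup.centralizer_singleton_ne_top_of_center_eq_bot hZ hx1)
    exact (Nat.le_of_dvd (Nat.factorial_pos _) hG).trans
      (Nat.factorial_le (hx.le.trans (by gcongr)))
  · have hC : Subgroup.centralizer {i} = ⊤ :=
      Subgroup.centralizer_eq_top_iff_subset.mpr (by simp [hZ])
    have hG : Nat.card G ≤ 2 * n ^ 2 := by
      rw [← Subgroup.card_top, ← hC]
      nlinarith
    exact hG.trans (Nat.self_le_factorial _)
end

section
/- Let G be a finite group, i an involution in G, and N a normal subgroup of G such that the centralizer of the coset iN in the quotient group G/N has the same order as the centralizer C_G(i). Then every element of N has the form i·(g⁻¹·i·g) for some g ∈ G; consequently every conjugate of i inverts every element of N, the subgroup N centralizes the set i·i^G = {i·(g⁻¹·i·g) : g ∈ G}, and N is contained in the center of the subgroup [i,G]. -/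
/-!
Counting conjugates: `|i^G| = |G| / |C_G(i)|` and `|(iN)^{G/N}| = |G/N| / |C_{G/N}(iN)|`, so the
hypothesis on centralizers forces `i^G` to be the full preimage of `(iN)^{G/N}`, which contains the
coset `iN`. Hence every `x ∈ N` is `i * j` with `j` a conjugate of `i`; as a product of two
involutions, `x` is inverted by `i`, hence (`N` being normal) by every conjugate of `i`, and so it
commutes with every product of two conjugates of `i`, in particular with the generators of `[i, G]`.
-/

open Subgroup

section

variable {G : Type*} [Group G]

theorem card_conjugatesOf_mul_card_centralizer (g : G) :
    Nat.card (conjugatesOf g) * Nat.card (centralizer ({g} : Set G)) = Nat.card G := by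
  have horbit : conjugatesOf g = MulAction.orbit (ConjAct G) g := by
    ext h
    rw [ConjAct.mem_orbit_conjAct, isConj_comm]
    rfl
  rw [horbit, nat_card_centralizer_nat_card_stabilizer, Nat.card_coe_set_eq,
    ← MulAction.index_stabilizer, index_mul_card, Nat.card_congr ConjAct.ofConjAct.toEquiv]

theorem conjugatesOf_eq_preimage_of_card_centralizer_eq [Finite G] (g : G) (N : Subgroup G)
    [N.Normal] (hcard : Nat.card (centralizer ({(g : G ⧸ N)} : Set (G ⧸ N))) =
      Nat.card (centralizer ({g} : Set G))) :
    conjugatesOf g = QuotientGroup.mk ⁻¹' conjugatesOf (g : G ⧸ N) := by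
  have hsub : conjugatesOf g ⊆ QuotientGroup.mk ⁻¹' conjugatesOf (g : G ⧸ N) :=
    fun _ h => (QuotientGroup.mk' N).map_isConj h
  have hcard_preimage : Nat.card (QuotientGroup.mk ⁻¹' conjugatesOf (g : G ⧸ N)) =
      Nat.card N * Nat.card (conjugatesOf (g : G ⧸ N)) := by
    rw [Nat.card_congr (QuotientGroup.preimageMkEquivSubgroupProdSet N _), Nat.card_prod]
  have hcard_eq : Nat.card (conjugatesOf g) =
      Nat.card (QuotientGroup.mk ⁻¹' conjugatesOf (g : G ⧸ N)) := by
    refine Nat.eq_of_mul_eq_mul_right (Nat.card_pos (α := centralizer ({g} : Set G))) ?_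
    rw [card_conjugatesOf_mul_card_centralizer, hcard_preimage, mul_assoc, ← hcard,
      card_conjugatesOf_mul_card_centralizer, mul_comm, card_eq_card_quotient_mul_card_subgroup N]
  refine Set.eq_of_subset_of_ncard_le hsub ?_ (Set.toFinite _)
  rw [← Nat.card_coe_set_eq, ← Nat.card_coe_set_eq, hcard_eq]

theorem isConj_mul_of_card_centralizer_eq [Finite G] (g : G) (N : Subgroup G) [N.Normal]
    (hcard : Nat.card (centralizer ({(g : G ⧸ N)} : Set (G ⧸ N))) =
      Nat.card (centralizer ({g} : Set G))) {x : G} (hx : x ∈ N) :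
    IsConj g (g * x) := by
  have : g * x ∈ QuotientGroup.mk ⁻¹' conjugatesOf (g : G ⧸ N) := by
    rw [Set.mem_preimage, QuotientGroup.mk_mul, (QuotientGroup.eq_one_iff x).2 hx, mul_one]
    exact mem_conjugatesOf_self
  rwa [← conjugatesOf_eq_preimage_of_card_centralizer_eq g N hcard] at this

theorem exists_eq_mul_conj_of_isConj_mul {i x : G} (hi : i ^ 2 = 1) (h : IsConj i (i * x)) :
    ∃ g : G, x = i * (g⁻¹ * i * g) := by
  obtain ⟨c, hc⟩ := isConj_iff.mp h
  refine ⟨c⁻¹, ?_⟩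
  calc x = i * (i * x) := by rw [← mul_assoc, ← pow_two, hi, one_mul]
    _ = i * (c⁻¹⁻¹ * i * c⁻¹) := by rw [← hc, inv_inv]

theorem mul_conj_conj_eq_inv {i : G} (hi : i ^ 2 = 1) (g : G) :
    i * (i * (g⁻¹ * i * g)) * i⁻¹ = (i * (g⁻¹ * i * g))⁻¹ := by
  have hinv : i⁻¹ = i := inv_eq_of_mul_eq_one_right (by rw [← pow_two, hi])
  simp only [mul_inv_rev, inv_inv, hinv]
  rw [← mul_assoc i i, ← pow_two, hi]
  group

theorem conj_conj_eq_inv_of_forall_mem {a : G} {N : Subgroup G} [N.Normal]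
    (h : ∀ x ∈ N, a * x * a⁻¹ = x⁻¹) {x : G} (hx : x ∈ N) (g : G) :
    (g⁻¹ * a * g) * x * (g⁻¹ * a * g)⁻¹ = x⁻¹ := by
  calc (g⁻¹ * a * g) * x * (g⁻¹ * a * g)⁻¹ = g⁻¹ * (a * (g * x * g⁻¹) * a⁻¹) * g := by group
    _ = x⁻¹ := by rw [h _ (‹N.Normal›.conj_mem x hx g)]; group

theorem commute_mul_of_conj_eq_inv {a b x : G} (ha : a * x * a⁻¹ = x⁻¹)
    (hb : b * x * b⁻¹ = x⁻¹) : Commute x (a * b) := by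
  have : (a * b) * x * (a * b)⁻¹ = x := by
    calc (a * b) * x * (a * b)⁻¹ = a * (b * x * b⁻¹) * a⁻¹ := by group
      _ = (a * x * a⁻¹)⁻¹ := by rw [hb]; group
      _ = x := by rw [ha, inv_inv]
  exact (mul_inv_eq_iff_eq_mul.mp this).symm

end

theorem normal_subgroup_of_equal_centralizer_card_general {G : Type*} [Group G] [Finite G]
    (i : G) (hi2 : i ^ 2 = 1) (N : Subgroup G) [N.Normal]
    (hcard : Nat.card (Subgroup.centralizer ({(QuotientGroup.mk i : G ⧸ N)} : Set (G ⧸ N))) =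
      Nat.card (Subgroup.centralizer ({i} : Set G))) :
    (∀ x ∈ N, ∃ g : G, x = i * (g⁻¹ * i * g)) ∧
    (∀ x ∈ N, ∀ g : G, (g⁻¹ * i * g) * x * (g⁻¹ * i * g)⁻¹ = x⁻¹) ∧
    (∀ x ∈ N, ∀ g : G, Commute x (i * (g⁻¹ * i * g))) ∧
    (∀ x ∈ N, x ∈ Subgroup.closure {y : G | ∃ g : G, i⁻¹ * g⁻¹ * i * g = y} ∧
      ∀ y ∈ Subgroup.closure {y : G | ∃ g : G, i⁻¹ * g⁻¹ * i * g = y}, Commute x y) := by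
  have hN_eq : ∀ x ∈ N, ∃ g : G, x = i * (g⁻¹ * i * g) := fun x hx =>
    exists_eq_mul_conj_of_isConj_mul hi2 (isConj_mul_of_card_centralizer_eq i N hcard hx)
  have hi_inverts : ∀ x ∈ N, i * x * i⁻¹ = x⁻¹ := by
    intro x hx
    obtain ⟨g, rfl⟩ := hN_eq x hx
    exact mul_conj_conj_eq_inv hi2 g
  have hconj_inverts := fun x (hx : x ∈ N) => conj_conj_eq_inv_of_forall_mem hi_inverts hx
  have hcommute : ∀ x ∈ N, ∀ g : G, Commute x (i * (g⁻¹ * i * g)) := fun x hx g =>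
    commute_mul_of_conj_eq_inv (hi_inverts x hx) (hconj_inverts x hx g)
  have hcommutator : ∀ g : G, i⁻¹ * g⁻¹ * i * g = i * (g⁻¹ * i * g) := by
    intro g
    rw [inv_eq_of_mul_eq_one_right (by rw [← pow_two, hi2])]
    group
  refine ⟨hN_eq, hconj_inverts, hcommute, fun x hx => ⟨?_, fun y hy => ?_⟩⟩
  · obtain ⟨g, rfl⟩ := hN_eq x hx
    exact subset_closure ⟨g, hcommutator g⟩
  · have hle : closure {y : G | ∃ g : G, i⁻¹ * g⁻¹ * i * g = y} ≤ centralizer {x} := by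
      rw [closure_le]
      rintro _ ⟨g, rfl⟩
      exact mem_centralizer_singleton_iff.mpr (hcommutator g ▸ hcommute x hx g).eq.symm
    exact (mem_centralizer_singleton_iff.mp (hle hy)).symm

/-- Let `G` be a finite group, `i` an involution and `N` a normal subgroup such that the
centralizer of `iN` in `G/N` has the same order as `C_G(i)`. Then every element of `N` has
the form `i * i^g`, every conjugate of `i` inverts every element of `N`, the subgroup `N`
centralizes the set `i * i^G`, and `N` lies in the center of the subgroup `[i, G]`. -/
theorem normal_subgroup_of_equal_centralizer_card {G : Type*} [Group G] [Finite G]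
    (i : G) (hi1 : i ≠ 1) (hi2 : i ^ 2 = 1) (N : Subgroup G) [N.Normal]
    (hcard : Nat.card (Subgroup.centralizer ({(QuotientGroup.mk i : G ⧸ N)} : Set (G ⧸ N))) =
      Nat.card (Subgroup.centralizer ({i} : Set G))) :
    (∀ x ∈ N, ∃ g : G, x = i * (g⁻¹ * i * g)) ∧
    (∀ x ∈ N, ∀ g : G, (g⁻¹ * i * g) * x * (g⁻¹ * i * g)⁻¹ = x⁻¹) ∧
    (∀ x ∈ N, ∀ g : G, Commute x (i * (g⁻¹ * i * g))) ∧
    (∀ x ∈ N, x ∈ Subgroup.closure {y : G | ∃ g : G, i⁻¹ * g⁻¹ * i * g = y} ∧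
      ∀ y ∈ Subgroup.closure {y : G | ∃ g : G, i⁻¹ * g⁻¹ * i * g = y}, Commute x y) :=
  normal_subgroup_of_equal_centralizer_card_general i hi2 N hcard
end

section
/- There exists a function f : ℕ → ℕ such that for every natural number n the following holds: if G is a locally finite group and α is an automorphism of G with α ∘ α = id such that Fix(α) has at most n elements, then the subgroup [G,α] has index at most n in G, and every element of [G,α] is a product of at most f(n) elements of the form g⁻¹·α(g) with g ∈ G. -/
/-!
Write `[g, α] = g⁻¹ * α g`. Two elements have the same `[·, α]` iff they differ by a fixed point
of `α` on the left, so a finite set `K` has `|K| ≤ n * |S_K|` for `S_K = {[g, α] | g ∈ K}`; when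
`K` is an `α`-invariant subgroup, `S_K` is symmetric since `[g, α]⁻¹ = [α g, α]`.

For a finite symmetric `S ∋ 1`, as long as the powers `S ^ k` keep growing, three more factors add
at least `|S|` elements: a new element `x` of `S ^ (k + 2)` has `x • S` disjoint from `S ^ k`.
So `|S ^ (3n + 1)| ≤ n * |S|` forces the powers to stabilise by then, at the subgroup `⟨S⟩`.

In a locally finite group every finite set lies in a finite `α`-invariant subgroup `K`, to which
both counts apply: `n + 1` elements of `K` cannot lie in distinct cosets of `⟨S_K⟩`, and every
element of `[G, α]` already lies in some `⟨S_K⟩ = S_K ^ (3n + 1)`.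
-/

open Pointwise Finset Subgroup

namespace Finset

variable {G : Type*} [Group G] [DecidableEq G] {S : Finset G}

lemma pow_eq_of_pow_succ_eq {k m : ℕ} (h : S ^ (k + 1) = S ^ k) (hkm : k ≤ m) :
    S ^ m = S ^ k := by
  induction m, hkm using Nat.le_induction with
  | base => rfl
  | succ m _ ih => rw [pow_succ, ih, ← pow_succ, h]

lemma card_pow_add_card_le (h1 : 1 ∈ S) (hS : S⁻¹ = S) {k : ℕ}
    (hne : S ^ (k + 2) ≠ S ^ (k + 1)) : #(S ^ k) + #S ≤ #(S ^ (k + 3)) := by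
  obtain ⟨x, hx, hx'⟩ := not_subset.1 fun h ↦
    hne (h.antisymm (pow_subset_pow_right h1 (by omega)))
  have hdisj : Disjoint (S ^ k) (x • S) := by
    refine disjoint_right.2 fun _ hy hyk ↦ hx' ?_
    obtain ⟨s, hs, rfl⟩ := mem_smul_finset.1 hy
    have : x * s * s⁻¹ ∈ S ^ k * S := mul_mem_mul hyk (hS ▸ inv_mem_inv hs)
    rwa [mul_inv_cancel_right, ← pow_succ] at this
  have hsub : S ^ k ∪ x • S ⊆ S ^ (k + 3) := by
    refine union_subset (pow_subset_pow_right h1 (by omega)) fun _ hy ↦ ?_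
    obtain ⟨s, hs, rfl⟩ := mem_smul_finset.1 hy
    exact pow_succ S (k + 2) ▸ mul_mem_mul hx hs
  calc #(S ^ k) + #S = #(S ^ k ∪ x • S) := by rw [card_union_of_disjoint hdisj, card_smul_finset]
    _ ≤ #(S ^ (k + 3)) := card_le_card hsub

lemma mul_card_le_card_pow (h1 : 1 ∈ S) (hS : S⁻¹ = S) :
    ∀ {j : ℕ}, S ^ (3 * j + 1) ≠ S ^ (3 * j) → (j + 1) * #S ≤ #(S ^ (3 * j + 1))
  | 0, _ => by simp
  | j + 1, hne => by
    have hne' : ∀ k ≤ 3 * j + 3, S ^ (k + 1) ≠ S ^ k := fun k hk h ↦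
      hne ((pow_eq_of_pow_succ_eq h (by omega)).trans (pow_eq_of_pow_succ_eq h hk).symm)
    calc (j + 1 + 1) * #S = (j + 1) * #S + #S := by ring
      _ ≤ #(S ^ (3 * j + 1)) + #S := by gcongr; exact mul_card_le_card_pow h1 hS (hne' _ (by omega))
      _ ≤ #(S ^ (3 * (j + 1) + 1)) := card_pow_add_card_le h1 hS (hne' (3 * j + 2) (by omega))

lemma coe_closure_subset_pow_of_pow_succ_eq (h1 : 1 ∈ S) (hS : S⁻¹ = S) {k : ℕ}
    (h : S ^ (k + 1) = S ^ k) : (closure (S : Set G) : Set G) ⊆ ↑(S ^ k) := by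
  intro x hx
  induction hx using closure_induction with
  | mem y hy => exact h ▸ pow_subset_pow_right h1 (by omega) (pow_one S ▸ hy)
  | one => exact one_mem_pow h1
  | mul a b _ _ ha hb =>
    have := mul_mem_mul ha hb
    rwa [← pow_add, pow_eq_of_pow_succ_eq h (by omega)] at this
  | inv a _ ha => rwa [← hS, inv_pow, mem_coe, mem_inv', inv_inv]

theorem coe_closure_subset_pow_of_card_le (h1 : 1 ∈ S) (hS : S⁻¹ = S) {n : ℕ}
    (hcard : #(S ^ (3 * n + 1)) ≤ n * #S) : (closure (S : Set G) : Set G) ⊆ ↑(S ^ (3 * n + 1)) := by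
  by_cases h : S ^ (3 * n + 1) = S ^ (3 * n)
  · rw [h]; exact coe_closure_subset_pow_of_pow_succ_eq h1 hS h
  · have hgrowth := mul_card_le_card_pow h1 hS h
    have hpos : 0 < #S := card_pos.2 ⟨1, h1⟩
    nlinarith

end Finset

lemma Finset.exists_ne_inv_mul_mem_closure_of_card_lt {G : Type*} [Group G]
    {S T : Finset G} {n : ℕ} (r : Fin (n + 1) → G) (hr : ∀ i, ∀ s ∈ S, r i * s ∈ T)
    (hcard : #T < (n + 1) * #S) : ∃ i j, i ≠ j ∧ (r i)⁻¹ * r j ∈ closure (S : Set G) := by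
  obtain ⟨⟨i, s⟩, hs, ⟨j, t⟩, ht, hne, heq⟩ :=
    exists_ne_map_eq_of_card_lt_of_maps_to (s := univ ×ˢ S) (t := T)
      (f := fun p ↦ r p.1 * p.2) (by simpa using hcard) fun p hp ↦ hr p.1 p.2 (mem_product.1 hp).2
  simp only [mem_product, mem_univ, true_and] at hs ht heq
  have hij : i ≠ j := by rintro rfl; exact hne (by simpa using heq)
  refine ⟨i, j, hij, ?_⟩
  rw [show (r i)⁻¹ * r j = s * t⁻¹ by rw [inv_mul_eq_iff_eq_mul, ← mul_assoc, heq]; group]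
  exact mul_mem (subset_closure hs) (inv_mem (subset_closure ht))

lemma Subgroup.index_le_of_forall_exists_inv_mul_mem {G : Type*} [Group G] {H : Subgroup G}
    {n : ℕ} (h : ∀ r : Fin (n + 1) → G, ∃ i j, i ≠ j ∧ (r i)⁻¹ * r j ∈ H) : H.index ≤ n := by
  by_contra! hlt
  have : H.FiniteIndex := ⟨by omega⟩
  have : Fintype (G ⧸ H) := Fintype.ofFinite _
  obtain ⟨e⟩ := Function.Embedding.nonempty_of_card_le (α := Fin (n + 1)) (β := G ⧸ H)
    (by rw [Fintype.card_fin, ← Nat.card_eq_fintype_card, ← index_eq_card]; omega)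
  obtain ⟨i, j, hij, hmem⟩ := h fun i ↦ (e i).out
  exact hij (e.injective (by simpa using QuotientGroup.eq.2 hmem))

lemma Subgroup.exists_finset_mem_closure_image {G ι : Type*} [Group G] (f : ι → G) {x : G}
    (hx : x ∈ closure (Set.range f)) : ∃ T : Finset ι, x ∈ closure (f '' T) := by
  classical
  induction hx using closure_induction with
  | mem _ hy => obtain ⟨i, rfl⟩ := hy; exact ⟨{i}, subset_closure (by simp)⟩
  | one => exact ⟨∅, one_mem _⟩
  | mul _ _ _ _ ha hb =>
    obtain ⟨T₁, h₁⟩ := ha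
    obtain ⟨T₂, h₂⟩ := hb
    refine ⟨T₁ ∪ T₂, mul_mem (closure_mono ?_ h₁) (closure_mono ?_ h₂)⟩ <;> gcongr <;> simp
  | inv _ _ ha => obtain ⟨T, hT⟩ := ha; exact ⟨T, inv_mem hT⟩

lemma Set.exists_list_map_prod_eq_of_mem_range_pow {M ι : Type*} [Monoid M] (f : ι → M) {x : M} :
    ∀ {m : ℕ}, x ∈ Set.range f ^ m → ∃ l : List ι, l.length = m ∧ (l.map f).prod = x
  | 0, hx => ⟨[], rfl, (Set.mem_one.1 (pow_zero (Set.range f) ▸ hx)).symm⟩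
  | m + 1, hx => by
    obtain ⟨y, hy, _, ⟨i, rfl⟩, rfl⟩ := Set.mem_mul.1 (pow_succ (Set.range f) m ▸ hx)
    obtain ⟨l, hl, rfl⟩ := exists_list_map_prod_eq_of_mem_range_pow f hy
    exact ⟨l ++ [i], by simp [hl], by simp⟩

namespace MonoidHom

variable {G : Type*} [Group G] (α : G →* G)

def commutatorWith (g : G) : G := g⁻¹ * α g

variable {α}

lemma commutatorWith_inv (hα : Function.Involutive α) (g : G) :
    (α.commutatorWith g)⁻¹ = α.commutatorWith (α g) := by
  simp [commutatorWith, hα g]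

lemma map_mul_inv_eq_of_commutatorWith_eq {a b : G}
    (h : α.commutatorWith a = α.commutatorWith b) : α (a * b⁻¹) = a * b⁻¹ :=
  calc α (a * b⁻¹) = a * α.commutatorWith a * (α.commutatorWith b)⁻¹ * b⁻¹ := by
        simp [commutatorWith, mul_assoc]
    _ = a * b⁻¹ := by rw [h]; group

section DecidableEq

variable [DecidableEq G]

lemma card_le_mul_card_image_commutatorWith {n : ℕ} (hfix : {g | α g = g}.Finite)
    (hn : {g | α g = g}.ncard ≤ n) (K : Finset G) : #K ≤ n * #(K.image α.commutatorWith) := by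
  refine card_le_mul_card_image K n fun b hb ↦ le_trans ?_ hn
  obtain ⟨a₀, -, rfl⟩ := mem_image.1 hb
  rw [Set.ncard_eq_toFinset_card _ hfix]
  refine card_le_card_of_injOn (· * a₀⁻¹) (fun a ha ↦ ?_) fun _ _ _ _ h ↦ mul_right_cancel h
  simpa using map_mul_inv_eq_of_commutatorWith_eq (mem_filter.1 ha).2

variable {K : Subgroup G} (hK : (K : Set G).Finite)

lemma inv_image_commutatorWith (hα : Function.Involutive α) (hKα : ∀ g ∈ K, α g ∈ K) :
    (hK.toFinset.image α.commutatorWith)⁻¹ = hK.toFinset.image α.commutatorWith := by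
  set S := hK.toFinset.image α.commutatorWith
  have hinv : ∀ y ∈ S, y⁻¹ ∈ S := by
    simp only [S, mem_image, Set.Finite.mem_toFinset, SetLike.mem_coe]
    rintro _ ⟨g, hg, rfl⟩
    exact ⟨α g, hKα g hg, (commutatorWith_inv hα g).symm⟩
  ext y
  exact ⟨fun hy ↦ inv_inv y ▸ hinv _ (mem_inv'.1 hy), fun hy ↦ mem_inv'.2 (hinv y hy)⟩

lemma coe_image_commutatorWith_subset (hKα : ∀ g ∈ K, α g ∈ K) :
    ↑(hK.toFinset.image α.commutatorWith) ⊆ (K : Set G) := by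
  simp only [coe_image, Set.Finite.coe_toFinset, Set.image_subset_iff]
  exact fun g hg ↦ K.mul_mem (K.inv_mem hg) (hKα g hg)

lemma one_mem_image_commutatorWith : 1 ∈ hK.toFinset.image α.commutatorWith :=
  mem_image.2 ⟨1, by simp, by simp [commutatorWith]⟩

theorem coe_closure_image_commutatorWith_subset_pow {n : ℕ} (hfix : {g | α g = g}.Finite)
    (hn : {g | α g = g}.ncard ≤ n) (hα : Function.Involutive α) (hKα : ∀ g ∈ K, α g ∈ K) :
    (closure (hK.toFinset.image α.commutatorWith : Set G) : Set G) ⊆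
      ↑((hK.toFinset.image α.commutatorWith) ^ (3 * n + 1)) := by
  refine coe_closure_subset_pow_of_card_le (one_mem_image_commutatorWith hK)
    (inv_image_commutatorWith hK hα hKα) ?_
  calc #((hK.toFinset.image α.commutatorWith) ^ (3 * n + 1)) ≤ #hK.toFinset := by
        refine card_le_card (coe_subset.1 ?_)
        simpa using Subgroup.pow_subset (coe_image_commutatorWith_subset hK hKα)
    _ ≤ n * #(hK.toFinset.image α.commutatorWith) := card_le_mul_card_image_commutatorWith hfix hn _

end DecidableEq

lemma exists_finite_subgroup_subset_forall_map_mem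
    (hLF : ∀ s : Finset G, (closure (s : Set G) : Set G).Finite) (hα : Function.Involutive α)
    (T : Finset G) : ∃ K : Subgroup G, (K : Set G).Finite ∧ (T : Set G) ⊆ K ∧ ∀ g ∈ K, α g ∈ K := by
  classical
  refine ⟨closure ↑(T ∪ T.image α), hLF _, subset_closure.trans' (by simp), fun g hg ↦ ?_⟩
  suffices Subgroup.closure ↑(T ∪ T.image α) ≤ (Subgroup.closure ↑(T ∪ T.image α)).comap α from
    this hg
  refine (Subgroup.closure_le _).2 fun x hx ↦ subset_closure ?_
  simp only [coe_union, coe_image, Set.mem_union, Set.mem_image, mem_coe] at hx ⊢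
  rcases hx with hx | ⟨t, ht, rfl⟩
  · exact Or.inr ⟨x, hx, rfl⟩
  · exact Or.inl (by rwa [hα t])

variable {n : ℕ}

theorem index_closure_range_commutatorWith_le
    (hLF : ∀ s : Finset G, (closure (s : Set G) : Set G).Finite) (hα : Function.Involutive α)
    (hfix : {g | α g = g}.Finite) (hn : {g | α g = g}.ncard ≤ n) :
    (closure (Set.range α.commutatorWith)).index ≤ n := by
  classical
  refine index_le_of_forall_exists_inv_mul_mem fun r ↦ ?_
  obtain ⟨K, hK, hrK, hKα⟩ := exists_finite_subgroup_subset_forall_map_mem hLF hα (univ.image r)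
  have hr : ∀ i, r i ∈ K := fun i ↦ hrK (by simp)
  obtain ⟨i, j, hij, hmem⟩ := exists_ne_inv_mul_mem_closure_of_card_lt (T := hK.toFinset) r
    (fun i s hs ↦ hK.mem_toFinset.2 (K.mul_mem (hr i)
      (coe_image_commutatorWith_subset hK hKα hs)))
    (lt_of_le_of_lt (card_le_mul_card_image_commutatorWith hfix hn _)
      (Nat.mul_lt_mul_of_pos_right (by omega) (card_pos.2 ⟨1, one_mem_image_commutatorWith hK⟩)))
  exact ⟨i, j, hij, closure_mono (by simp) hmem⟩

theorem coe_closure_range_commutatorWith_subset_pow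
    (hLF : ∀ s : Finset G, (closure (s : Set G) : Set G).Finite) (hα : Function.Involutive α)
    (hfix : {g | α g = g}.Finite) (hn : {g | α g = g}.ncard ≤ n) :
    (closure (Set.range α.commutatorWith) : Set G) ⊆ Set.range α.commutatorWith ^ (3 * n + 1) := by
  classical
  intro x hx
  obtain ⟨T, hxT⟩ := exists_finset_mem_closure_image _ hx
  obtain ⟨K, hK, hTK, hKα⟩ := exists_finite_subgroup_subset_forall_map_mem hLF hα T
  have hx' := coe_closure_image_commutatorWith_subset_pow hK hfix hn hα hKα
    (closure_mono (by simpa using Set.image_mono hTK) hxT)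
  rw [Finset.coe_pow] at hx'
  exact Set.pow_subset_pow_left (by simp) hx'

end MonoidHom

/-- There is a function `f : ℕ → ℕ` such that for every locally finite group `G` with an
involutory automorphism `α` fixing at most `n` elements, the subgroup `[G, α]` has index
at most `n` and every element of it is a product of at most `f n` elements of the form
`g⁻¹ * α g`. -/
theorem locallyFinite_involutory_automorphism_commutator_bounded :
    ∃ f : ℕ → ℕ, ∀ n : ℕ, ∀ (G : Type) [Group G],
      (∀ s : Finset G, (Subgroup.closure (s : Set G) : Set G).Finite) →
      ∀ α : G ≃* G, (∀ g, α (α g) = g) →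
      {g : G | α g = g}.Finite → {g : G | α g = g}.ncard ≤ n →
      (Subgroup.closure {x : G | ∃ g : G, g⁻¹ * α g = x}).index ≤ n ∧
      ∀ x ∈ Subgroup.closure {x : G | ∃ g : G, g⁻¹ * α g = x},
        ∃ l : List G, l.length ≤ f n ∧ (l.map fun g => g⁻¹ * α g).prod = x := by
  refine ⟨fun n ↦ 3 * n + 1, fun n G _ hLF α hα hfix hn ↦ ⟨?_, fun x hx ↦ ?_⟩⟩
  · exact MonoidHom.index_closure_range_commutatorWith_le (α := α.toMonoidHom) hLF hα hfix hn
  · obtain ⟨l, hl, hprod⟩ := Set.exists_list_map_prod_eq_of_mem_range_pow _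
      (MonoidHom.coe_closure_range_commutatorWith_subset_pow (α := α.toMonoidHom) hLF hα hfix hn hx)
    exact ⟨l, hl.le, hprod⟩
end

section
/- There exists a function f : ℕ → ℕ such that for every natural number n the following holds: if G is a finite group, N is a subgroup of G contained in the center Z(G), and the derived subgroup of the quotient group G/N has order at most n, then G has a subgroup K of index at most f(n) in G which is nilpotent of class at most 2. -/
open scoped commutatorElement

open Subgroup

/-!
Since `N` is central, the commutator map `G × G → G` factors through `G/N × G/N`. Hence the
conjugate `x⁅a, b⁆x⁻¹ = ⁅⁅x, a⁆a, ⁅x, b⁆b⁆` is determined by the images of `⁅x, a⁆` and `⁅x, b⁆`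
in `(G/N)'`, so every commutator of `G` has at most `n²` conjugates, where `n = |(G/N)'|`.
Moreover the centralizer of a commutator only depends on its image in `(G/N)'`, so the
centralizer `K` of `G'` is an intersection of at most `n` subgroups of index at most `n²`.
Finally `⁅⁅a, b⁆, c⁆ = 1` for all `a, b ∈ G` and `c ∈ K`.
-/

section

variable {G : Type*} [Group G] {N : Subgroup G}

theorem commutatorElement_eq_of_mk_eq (hN : N ≤ center G) {a a' b b' : G}
    (ha : (a : G ⧸ N) = a') (hb : (b : G ⧸ N) = b') : ⁅a, b⁆ = ⁅a', b'⁆ := by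
  obtain ⟨z, hz, rfl⟩ : ∃ z ∈ N, a' = a * z :=
    ⟨a⁻¹ * a', QuotientGroup.eq.mp ha, by group⟩
  obtain ⟨w, hw, rfl⟩ : ∃ w ∈ N, b' = b * w :=
    ⟨b⁻¹ * b', QuotientGroup.eq.mp hb, by group⟩
  have hz' : ∀ g : G, ⁅z, g⁆ = 1 := fun g =>
    commutatorElement_eq_one_iff_mul_comm.mpr (mem_center_iff.mp (hN hz) g).symm
  have hw' : ∀ g : G, ⁅g, w⁆ = 1 := fun g =>
    commutatorElement_eq_one_iff_mul_comm.mpr (mem_center_iff.mp (hN hw) g)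
  rw [commutatorElement_mul_left_eq_conj_mul, hz', commutatorElement_mul_right_eq_mul_conj, hw']
  group

theorem centralizer_singleton_eq_of_mk_eq (hN : N ≤ center G) {g g' : G}
    (h : (g : G ⧸ N) = g') : centralizer {g} = centralizer {g'} := by
  ext x
  simp only [mem_centralizer_singleton_iff, eq_comm (a := x * _),
    ← commutatorElement_eq_one_iff_mul_comm, commutatorElement_eq_of_mk_eq hN h rfl]

theorem conj_commutatorElement (x a b : G) : x * ⁅a, b⁆ * x⁻¹ = ⁅⁅x, a⁆ * a, ⁅x, b⁆ * b⁆ := by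
  simp only [commutatorElement_def]; group

theorem index_centralizer_singleton (g : G) :
    (centralizer {g}).index = (MulAction.orbit (ConjAct G) g).ncard := by
  rw [centralizer_eq_comap_stabilizer]
  exact (index_comap_of_surjective _ ConjAct.toConjAct.surjective).trans
    (MulAction.index_stabilizer _ _)

theorem index_centralizer_commutatorElement_le [N.Normal] (hN : N ≤ center G)
    [Finite (commutator (G ⧸ N))] (a b : G) :
    (centralizer {⁅a, b⁆}).index ≤ Nat.card (commutator (G ⧸ N)) ^ 2 := by
  set D : Set (G ⧸ N) := commutator (G ⧸ N)
  have hD : D.Finite := Set.toFinite _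
  have h_orbit : MulAction.orbit (ConjAct G) ⁅a, b⁆ ⊆
      (fun p : (G ⧸ N) × (G ⧸ N) => ⁅p.1.out * a, p.2.out * b⁆) '' D ×ˢ D := by
    rintro _ ⟨x, rfl⟩
    obtain ⟨y, rfl⟩ := ConjAct.toConjAct.surjective x
    refine ⟨(⁅(y : G ⧸ N), a⁆, ⁅(y : G ⧸ N), b⁆),
      ⟨commutator_mem_commutator (mem_top _) (mem_top _),
        commutator_mem_commutator (mem_top _) (mem_top _)⟩, ?_⟩
    dsimp only
    rw [ConjAct.toConjAct_smul, conj_commutatorElement]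
    exact commutatorElement_eq_of_mk_eq hN (by simp [commutatorElement_def])
      (by simp [commutatorElement_def])
  calc (centralizer {⁅a, b⁆}).index
      = (MulAction.orbit (ConjAct G) ⁅a, b⁆).ncard := index_centralizer_singleton _
    _ ≤ (_ '' D ×ˢ D).ncard := Set.ncard_le_ncard h_orbit ((hD.prod hD).image _)
    _ ≤ (D ×ˢ D).ncard := Set.ncard_image_le (hD.prod hD)
    _ = Nat.card (commutator (G ⧸ N)) ^ 2 := by rw [Set.ncard_prod, sq]; rfl

theorem index_centralizer_commutator_le [N.Normal] (hN : N ≤ center G)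
    [Finite (commutator (G ⧸ N))] :
    (centralizer (commutator G : Set G)).index ≤
      (Nat.card (commutator (G ⧸ N)) ^ 2) ^ Nat.card (commutator (G ⧸ N)) := by
  set n := Nat.card (commutator (G ⧸ N))
  have hsub : commutatorSet (G ⧸ N) ⊆ commutator (G ⧸ N) := by
    rw [commutator_eq_closure]; exact subset_closure
  have : Fintype (commutatorSet (G ⧸ N)) := (Set.toFinite _ |>.subset hsub).fintype
  have hlift : ∀ q : commutatorSet (G ⧸ N), ∃ a b : G, ((⁅a, b⁆ : G) : G ⧸ N) = q := by
    rintro ⟨_, x, y, rfl⟩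
    obtain ⟨a, rfl⟩ := QuotientGroup.mk_surjective x
    obtain ⟨b, rfl⟩ := QuotientGroup.mk_surjective y
    exact ⟨a, b, by simp [commutatorElement_def]⟩
  choose a b hab using hlift
  have hK : centralizer (commutator G : Set G) = ⨅ q, centralizer {⁅a q, b q⁆} := by
    rw [commutator_eq_closure, centralizer_closure]
    refine le_antisymm (le_iInf fun q => centralizer_le ?_) ?_
    · exact Set.singleton_subset_iff.mpr (commutator_mem_commutatorSet _ _)
    · rw [centralizer_eq_iInf]
      refine le_iInf₂ fun g ⟨x, y, hg⟩ => ?_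
      have hq : (g : G ⧸ N) ∈ commutatorSet (G ⧸ N) :=
        ⟨x, y, by simp [← hg, commutatorElement_def]⟩
      rw [centralizer_singleton_eq_of_mk_eq hN (hab ⟨_, hq⟩).symm]
      exact iInf_le _ _
  have hcard : Fintype.card (commutatorSet (G ⧸ N)) ≤ n := by
    rw [← Nat.card_eq_fintype_card]
    exact Set.ncard_le_ncard hsub (Set.toFinite _)
  calc (centralizer (commutator G : Set G)).index
      ≤ ∏ q, (centralizer {⁅a q, b q⁆}).index := hK ▸ index_iInf_le _
    _ ≤ ∏ _q : commutatorSet (G ⧸ N), n ^ 2 :=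
        Finset.prod_le_prod' fun q _ => index_centralizer_commutatorElement_le hN _ _
    _ = (n ^ 2) ^ Fintype.card (commutatorSet (G ⧸ N)) := Finset.prod_const _
    _ ≤ (n ^ 2) ^ n := Nat.pow_le_pow_right (pow_pos Nat.card_pos 2) hcard

end

/-- There is a function `f : ℕ → ℕ` such that any finite group `G` with a central subgroup
`N` such that the derived subgroup of `G/N` has order at most `n` contains a subgroup `K`
of index at most `f n` which is nilpotent of class at most two. -/
theorem finite_group_central_finiteByAbelian_nilpotent :
    ∃ f : ℕ → ℕ, ∀ n : ℕ, ∀ (G : Type) [Group G] [Finite G],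
      ∀ (N : Subgroup G) [N.Normal], N ≤ Subgroup.center G →
      Nat.card (commutator (G ⧸ N)) ≤ n →
      ∃ K : Subgroup G, K.index ≤ f n ∧
        ∀ a ∈ K, ∀ b ∈ K, ∀ c ∈ K, ⁅⁅a, b⁆, c⁆ = 1 := by
  refine ⟨fun n => (n ^ 2) ^ n, fun n G _ _ N _ hN hn => ⟨centralizer (commutator G), ?_, ?_⟩⟩
  · have hpos : 0 < n := Nat.card_pos.trans_le hn
    calc (centralizer (commutator G : Set G)).index
        ≤ (Nat.card (commutator (G ⧸ N)) ^ 2) ^ Nat.card (commutator (G ⧸ N)) :=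
          index_centralizer_commutator_le hN
      _ ≤ (n ^ 2) ^ n := (Nat.pow_le_pow_left (Nat.pow_le_pow_left hn 2) _).trans
            (Nat.pow_le_pow_right (pow_pos hpos 2) hn)
  · intro a _ b _ c hc
    rw [commutatorElement_eq_one_iff_mul_comm]
    exact mem_centralizer_iff.mp hc _ (commutator_mem_commutator (mem_top a) (mem_top b))
end

section
/- Let N be a group that is nilpotent of class at most 2, and let α be an automorphism of N with α ∘ α = id. Then α fixes every element of the derived subgroup of [N,α], where [N,α] is the subgroup of N generated by the set {x⁻¹·α(x) : x ∈ N}. -/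
open scoped commutatorElement

private lemma central_commutator_aux {N : Type*} [Group N] {x y z w : N}
    (hz : ∀ g, g * z = z * g) (hw : ∀ g, g * w = w * g) :
    ⁅x * z, y * w⁆ = ⁅x, y⁆ := by
  have hzI : ∀ g : N, g * z⁻¹ = z⁻¹ * g := fun g => by
    have h := hz g
    calc g * z⁻¹ = z⁻¹ * (g * z) * z⁻¹ := by rw [h]; group
      _ = z⁻¹ * g := by group
  have hwI : ∀ g : N, g * w⁻¹ = w⁻¹ * g := fun g => by
    have h := hw g
    calc g * w⁻¹ = w⁻¹ * (g * w) * w⁻¹ := by rw [h]; group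
      _ = w⁻¹ * g := by group
  have hz' : ∀ g t : N, g * (z * t) = z * (g * t) := fun g t => by
    rw [← mul_assoc, hz, mul_assoc]
  have hw' : ∀ g t : N, g * (w * t) = w * (g * t) := fun g t => by
    rw [← mul_assoc, hw, mul_assoc]
  have hzi : ∀ g t : N, g * (z⁻¹ * t) = z⁻¹ * (g * t) := fun g t => by
    rw [← mul_assoc, hzI, mul_assoc]
  have hwi : ∀ g t : N, g * (w⁻¹ * t) = w⁻¹ * (g * t) := fun g t => by
    rw [← mul_assoc, hwI, mul_assoc]
  calc ⁅x * z, y * w⁆ = x * (z * (y * (w * (z⁻¹ * (x⁻¹ * (w⁻¹ * y⁻¹)))))) := by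
        rw [commutatorElement_def]; group
    _ = ⁅x, y⁆ := by
        rw [hzi w, hzi y, mul_inv_cancel_left, hwi x⁻¹, mul_inv_cancel_left,
          commutatorElement_def]; group

private lemma inv_inv_commutator_aux {N : Type*} [Group N] {a b : N}
    (hc : ∀ g, g * ⁅a, b⁆ = ⁅a, b⁆ * g) : ⁅a⁻¹, b⁻¹⁆ = ⁅a, b⁆ := by
  have h1 : b * a * ⁅a, b⁆ = a * b := by
    calc b * a * ⁅a, b⁆ = b * (a * ⁅a, b⁆) := by rw [mul_assoc]
      _ = b * (⁅a, b⁆ * a) := by rw [hc a]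
      _ = b * ⁅a, b⁆ * a := by rw [mul_assoc]
      _ = ⁅a, b⁆ * b * a := by rw [hc b]
      _ = a * b := by rw [commutatorElement_def]; group
  have h2 : b * a * ⁅a⁻¹, b⁻¹⁆ = b * a * ⁅a, b⁆ := by
    rw [h1, commutatorElement_def, inv_inv, inv_inv]; group
  exact mul_left_cancel h2

/-- If `N` is nilpotent of class at most two and `α` is an involutory automorphism of `N`,
then `α` fixes every element of the derived subgroup of `[N, α]`. -/
theorem involutory_automorphism_fixes_derived_of_commutator_subgroup {N : Type*} [Group N]
    (hnil : commutator N ≤ Subgroup.center N) (α : N ≃* N) (hα : ∀ x, α (α x) = x) :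
    ∀ x ∈ ⁅Subgroup.closure {y : N | ∃ g : N, g⁻¹ * α g = y},
           Subgroup.closure {y : N | ∃ g : N, g⁻¹ * α g = y}⁆, α x = x := by
  set S : Set N := {y : N | ∃ g : N, g⁻¹ * α g = y} with hS
  set M := Subgroup.closure S with hM
  have hcomm : ∀ a b : N, ⁅a, b⁆ ∈ Subgroup.center N := fun a b =>
    hnil (Subgroup.commutator_mem_commutator (Subgroup.mem_top a) (Subgroup.mem_top b))
  -- the quotient by the center
  set π : N →* N ⧸ Subgroup.center N := QuotientGroup.mk' (Subgroup.center N) with hπ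
  have hπsurj : Function.Surjective π := QuotientGroup.mk'_surjective _
  have hQcomm : ∀ u v : N ⧸ Subgroup.center N, u * v = v * u := by
    intro u v
    obtain ⟨a, rfl⟩ := hπsurj u
    obtain ⟨b, rfl⟩ := hπsurj v
    have : π ⁅a, b⁆ = 1 := by
      rw [hπ, QuotientGroup.mk'_apply, QuotientGroup.eq_one_iff]
      exact hcomm a b
    rw [map_commutatorElement, commutatorElement_def] at this
    have := mul_right_cancel (a := π a * π b * (π a)⁻¹ * (π b)⁻¹ * (π b * π a))
      (b := π b * π a) (c := 1 * (π b * π a)) (by rw [this])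
    simpa [mul_assoc] using this
  -- Step 1: for all a ∈ M, a * α a ∈ center
  have step1 : ∀ a ∈ M, a * α a ∈ Subgroup.center N := by
    have key : ∀ a ∈ M, π a * π (α a) = 1 := by
      intro a ha
      induction ha using Subgroup.closure_induction with
      | mem y hy =>
        obtain ⟨g, rfl⟩ := hy
        simp only [map_mul, map_inv, hα]
        group
      | one => simp
      | mul x y _ _ hx hy =>
        simp only [map_mul]
        calc π x * π y * (π (α x) * π (α y))
            = π x * (π y * π (α x)) * π (α y) := by group
          _ = π x * (π (α x) * π y) * π (α y) := by rw [hQcomm (π y) (π (α x))]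
          _ = π x * π (α x) * (π y * π (α y)) := by group
          _ = 1 := by rw [hx, hy, one_mul]
      | inv x _ hx =>
        simp only [map_inv]
        rw [← mul_inv_rev, hQcomm, hx, inv_one]
    intro a ha
    have h1 : π (a * α a) = 1 := by rw [map_mul]; exact key a ha
    rwa [hπ, QuotientGroup.mk'_apply, QuotientGroup.eq_one_iff] at h1
  -- Step 2: ⁅M, M⁆ is fixed pointwise
  intro x hx
  have hle : ⁅M, M⁆ ≤ α.toMonoidHom.eqLocus (MonoidHom.id N) := by
    rw [Subgroup.commutator_le]
    intro a ha b hb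
    show α ⁅a, b⁆ = ⁅a, b⁆
    have hza := Subgroup.mem_center_iff.mp (step1 a ha)
    have hzb := Subgroup.mem_center_iff.mp (step1 b hb)
    have haa : α a = a⁻¹ * (a * α a) := by group
    have hbb : α b = b⁻¹ * (b * α b) := by group
    rw [map_commutatorElement, haa, hbb, central_commutator_aux hza hzb,
      inv_inv_commutator_aux (fun g => Subgroup.mem_center_iff.mp (hcomm a b) g)]
  exact hle hx
end

section
/- For every natural number n there exists a natural number N such that every finite group in which every abelian subgroup has order at most n has order at most N. (Equivalently, there are only finitely many finite groups, up to isomorphism, in which every abelian subgroup has size at most n.) -/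
/-- In a finite `p`-group, a nontrivial normal subgroup contains a nontrivial central
element. -/
lemma aux_pgroup_normal_inf_center {p : ℕ} [Fact p.Prime] {P : Type} [Group P] [Finite P]
    (hP : IsPGroup p P) (N : Subgroup P) [N.Normal] (hN : N ≠ ⊥) :
    ∃ x : P, x ∈ N ∧ x ∈ Subgroup.center P ∧ x ≠ 1 := by
  have hPc : IsPGroup p (ConjAct P) := hP.of_equiv ConjAct.toConjAct
  have hNp : IsPGroup p N := hP.to_subgroup N
  have hNnt : Nontrivial N := by
    rw [← Subgroup.one_lt_card_iff_ne_bot] at hN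
    exact Finite.one_lt_card_iff_nontrivial.mp hN
  obtain ⟨k, hk0, hk⟩ := hNp.nontrivial_iff_card.mp hNnt
  have hdvd : p ∣ Nat.card N := hk ▸ dvd_pow_self p hk0.ne'
  have h1 : (1 : N) ∈ MulAction.fixedPoints (ConjAct P) N := by
    intro g; exact smul_one g
  obtain ⟨b, hb, hb1⟩ := hPc.exists_fixed_point_of_prime_dvd_card_of_fixed_point (α := N) hdvd h1
  refine ⟨(b : P), b.2, ?_, ?_⟩
  · rw [Subgroup.mem_center_iff]
    intro g
    have := hb (ConjAct.toConjAct g)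
    have h2 : g * (b : P) * g⁻¹ = (b : P) := by
      have := congrArg (Subtype.val) this
      rw [ConjAct.Subgroup.val_conj_smul] at this
      simpa [ConjAct.toConjAct_smul] using this
    calc g * (b : P) = (g * (b : P) * g⁻¹) * g := by group
      _ = (b : P) * g := by rw [h2]
  · intro h
    exact hb1 (Subtype.ext (by simpa using h.symm))

/-- A finite `p`-group in which every abelian subgroup has order at most `n` has order at
most `n * n!`. -/
lemma aux_pgroup_card_le {p : ℕ} [Fact p.Prime] {P : Type} [Group P] [Finite P]
    (hP : IsPGroup p P) {n : ℕ}
    (h : ∀ H : Subgroup P, (∀ x ∈ H, ∀ y ∈ H, Commute x y) → Nat.card H ≤ n) :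
    Nat.card P ≤ n * n.factorial := by
  classical
  have := Fintype.ofFinite (Subgroup P)
  -- S : abelian normal subgroups
  set S : Finset (Subgroup P) :=
    Finset.univ.filter (fun A => A.Normal ∧ ∀ x ∈ A, ∀ y ∈ A, Commute x y) with hS
  have hbot : (⊥ : Subgroup P) ∈ S := by
    simp only [hS, Finset.mem_filter, Finset.mem_univ, true_and]
    refine ⟨inferInstance, ?_⟩
    intro x hx y hy
    rw [Subgroup.mem_bot] at hx
    subst hx; exact Commute.one_left y
  obtain ⟨A, hA, hAmax⟩ := S.exists_maximal ⟨⊥, hbot⟩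
  simp only [hS, Finset.mem_filter, Finset.mem_univ, true_and] at hA
  obtain ⟨hAnorm, hAab⟩ := hA
  -- A is self-centralizing
  have hCnorm : (Subgroup.centralizer (A : Set P)).Normal := by
    constructor
    intro c hc g
    rw [Subgroup.mem_centralizer_iff] at hc ⊢
    intro a ha
    have h1 : g⁻¹ * a * g ∈ A := by
      have := hAnorm.conj_mem a ha g⁻¹
      simpa [mul_assoc] using this
    have h2 := hc _ h1
    calc a * (g * c * g⁻¹) = g * ((g⁻¹ * a * g) * c) * g⁻¹ := by group
      _ = g * (c * (g⁻¹ * a * g)) * g⁻¹ := by rw [h2]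
      _ = g * c * g⁻¹ * a := by group
  have hAC : A ≤ Subgroup.centralizer (A : Set P) := by
    intro a ha
    rw [Subgroup.mem_centralizer_iff]
    intro b hb
    exact hAab b hb a ha
  have hC : Subgroup.centralizer (A : Set P) = A := by
    refine le_antisymm ?_ hAC
    by_contra hCA
    rw [SetLike.not_le_iff_exists] at hCA
    obtain ⟨z, hzC, hzA⟩ := hCA
    -- work in the quotient Q = P / A
    set Q := P ⧸ A with hQdef
    have hQ : IsPGroup p Q := hP.to_quotient A
    set φ := QuotientGroup.mk' A with hφ
    set N' := (Subgroup.centralizer (A : Set P)).map φ with hN'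
    have hN'norm : N'.Normal := hCnorm.map φ (QuotientGroup.mk'_surjective A)
    have hN'bot : N' ≠ ⊥ := by
      intro hb'
      have : φ z ∈ N' := Subgroup.mem_map_of_mem φ hzC
      rw [hb', Subgroup.mem_bot] at this
      exact hzA ((QuotientGroup.eq_one_iff z).mp this)
    obtain ⟨q, hqN, hqZ, hq1⟩ := aux_pgroup_normal_inf_center hQ N' hN'bot
    obtain ⟨c, hcC, hcq⟩ := hqN
    -- B = preimage of ⟨q⟩
    set B := (Subgroup.zpowers q).comap φ with hB
    have hzpZ : Subgroup.zpowers q ≤ Subgroup.center Q :=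
      (Subgroup.zpowers_le).mpr hqZ
    have hzpnorm : (Subgroup.zpowers q).Normal := by
      constructor
      intro y hy g
      have hyc := Subgroup.mem_center_iff.mp (hzpZ hy)
      have heq : g * y * g⁻¹ = y := by rw [hyc g]; group
      rw [heq]; exact hy
    have hBnorm : B.Normal := hzpnorm.comap φ
    have hAB : A ≤ B := by
      intro a ha
      show φ a ∈ Subgroup.zpowers q
      have : φ a = 1 := (QuotientGroup.eq_one_iff a).mpr ha
      rw [this]; exact Subgroup.one_mem _
    have hcB : c ∈ B := by
      show φ c ∈ Subgroup.zpowers q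
      rw [hcq]; exact Subgroup.mem_zpowers q
    have hcA : c ∉ A := by
      intro hcA
      exact hq1 (hcq ▸ (QuotientGroup.eq_one_iff c).mpr hcA)
    have hcomm : ∀ a ∈ A, Commute c a := by
      intro a ha
      have hcC' : c ∈ Subgroup.centralizer (A : Set P) := hcC
      rw [Subgroup.mem_centralizer_iff] at hcC'
      exact (hcC' a ha).symm
    -- B is abelian
    have hdec : ∀ u ∈ B, ∃ (k : ℤ) (a : P), a ∈ A ∧ u = c ^ k * a := by
      intro u hu
      obtain ⟨k, hk⟩ := hu
      refine ⟨k, (c ^ k)⁻¹ * u, ?_, by group⟩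
      have : φ (c ^ k) = φ u := by rw [map_zpow, hcq]; exact hk
      have := (QuotientGroup.eq (a := c ^ k) (b := u)).mp this
      simpa [mul_assoc] using this
    have hBab : ∀ x ∈ B, ∀ y ∈ B, Commute x y := by
      intro x hx y hy
      obtain ⟨k, a, ha, rfl⟩ := hdec x hx
      obtain ⟨m, b, hb, rfl⟩ := hdec y hy
      have h1 : Commute (c ^ k) (c ^ m) := (Commute.refl c).zpow_zpow k m
      have h2 : Commute (c ^ k) b := (hcomm b hb).zpow_left k
      have h3 : Commute a (c ^ m) := ((hcomm a ha).symm).zpow_right m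
      have h4 : Commute a b := hAab a ha b hb
      exact (h1.mul_right h2).mul_left (h3.mul_right h4)
    have hBS : B ∈ S := by
      simp only [hS, Finset.mem_filter, Finset.mem_univ, true_and]
      exact ⟨hBnorm, hBab⟩
    exact hcA (hAmax hBS hAB hcB)
  -- now use conjugation map P →* MulAut A
  have := hAnorm
  set f : P →* MulAut A := MulAut.conjNormal with hf
  have hker : f.ker = A := by
    ext g
    rw [MonoidHom.mem_ker]
    constructor
    · intro hg
      rw [← hC, Subgroup.mem_centralizer_iff]
      intro a ha
      have : ((f g) ⟨a, ha⟩ : P) = ((1 : MulAut A) ⟨a, ha⟩ : P) := by rw [hg]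
      simp only [MulAut.conjNormal_apply, MulAut.one_apply] at this
      have h2 : g * a = a * g := mul_inv_eq_iff_eq_mul.mp this
      exact h2.symm
    · intro hg
      have hg' := Subgroup.mem_centralizer_iff.mp (hAC hg)
      ext a
      show ((f g) a : P) = ((1 : MulAut A) a : P)
      simp only [hf, MulAut.conjNormal_apply, MulAut.one_apply]
      have := hg' (a : P) a.2
      rw [← this]; group
  have hcard : Nat.card P = Nat.card (P ⧸ f.ker) * Nat.card f.ker :=
    Subgroup.card_eq_card_quotient_mul_card_subgroup f.ker
  have hkA : Nat.card f.ker = Nat.card A := by rw [hker]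
  have hAn : Nat.card A ≤ n := h A hAab
  have hquot : Nat.card (P ⧸ f.ker) ≤ Nat.card (MulAut A) := by
    have e := (QuotientGroup.quotientKerEquivRange f).toEquiv
    calc Nat.card (P ⧸ f.ker) = Nat.card f.range := Nat.card_congr e
      _ ≤ Nat.card (MulAut A) :=
        Nat.card_le_card_of_injective _ Subtype.val_injective
  have hperm : Nat.card (MulAut A) ≤ (Nat.card A).factorial := by
    have := Fintype.ofFinite A
    have h1 : Nat.card (MulAut A) ≤ Nat.card (Equiv.Perm A) := by
      exact Nat.card_le_card_of_injective _ MulEquiv.toEquiv_injective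
    have h2 : Nat.card (Equiv.Perm A) = (Nat.card A).factorial := by
      classical
      rw [Nat.card_eq_fintype_card, Nat.card_eq_fintype_card, Fintype.card_perm]
    omega
  calc Nat.card P = Nat.card (P ⧸ f.ker) * Nat.card f.ker := hcard
    _ ≤ (Nat.card A).factorial * Nat.card A := by
        rw [hkA]
        exact Nat.mul_le_mul (le_trans hquot hperm) le_rfl
    _ ≤ n.factorial * n := Nat.mul_le_mul (Nat.factorial_le hAn) hAn
    _ = n * n.factorial := mul_comm _ _

/-- There are only finitely many finite groups in which every abelian subgroup has order
at most `n`: their orders are uniformly bounded. -/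
theorem finitely_many_finite_groups_with_bounded_abelian_subgroups (n : ℕ) :
    ∃ N : ℕ, ∀ (G : Type) [Group G] [Finite G],
      (∀ H : Subgroup G, (∀ x ∈ H, ∀ y ∈ H, Commute x y) → Nat.card H ≤ n) →
      Nat.card G ≤ N := by
  refine ⟨(n * n.factorial) ^ n, ?_⟩
  intro G _ _ hG
  rcases Nat.eq_zero_or_pos n with rfl | hn
  · exfalso
    have h1 := hG ⊥ (by
      intro x hx y hy
      rw [Subgroup.mem_bot] at hx
      subst hx; exact Commute.one_left y)
    rw [Subgroup.card_bot] at h1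
    omega
  set m := Nat.card G with hm
  have hm0 : m ≠ 0 := Nat.card_pos.ne'
  have key : ∀ p ∈ m.primeFactors, p ^ m.factorization p ≤ n * n.factorial := by
    intro p hp
    haveI : Fact p.Prime := ⟨Nat.prime_of_mem_primeFactors hp⟩
    obtain ⟨P⟩ : Nonempty (Sylow p G) := inferInstance
    rw [hm, ← Sylow.card_eq_multiplicity P]
    refine aux_pgroup_card_le P.isPGroup' ?_
    intro H hH
    have hinj : Function.Injective (P.1.subtype) := Subgroup.subtype_injective _
    have hcardeq : Nat.card H = Nat.card (H.map P.1.subtype) :=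
      Nat.card_congr (Subgroup.equivMapOfInjective H P.1.subtype hinj).toEquiv
    rw [hcardeq]
    refine hG _ ?_
    intro x hx y hy
    obtain ⟨x', hx', rfl⟩ := hx
    obtain ⟨y', hy', rfl⟩ := hy
    exact (hH x' hx' y' hy').map _
  have hcard_pf : m.primeFactors.card ≤ n := by
    have hsub : m.primeFactors ⊆ Finset.Ioc 0 n := by
      intro p hp
      have hp' : p.Prime := Nat.prime_of_mem_primeFactors hp
      haveI : Fact p.Prime := ⟨hp'⟩
      have hdvd : p ∣ m := Nat.dvd_of_mem_primeFactors hp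
      have := Fintype.ofFinite G
      rw [hm, Nat.card_eq_fintype_card] at hdvd
      obtain ⟨x, hx⟩ := exists_prime_orderOf_dvd_card p hdvd
      have hab : ∀ a ∈ Subgroup.zpowers x, ∀ b ∈ Subgroup.zpowers x, Commute a b := by
        intro a ha b hb
        obtain ⟨i, rfl⟩ := ha
        obtain ⟨j, rfl⟩ := hb
        exact (Commute.refl x).zpow_zpow i j
      have h1 := hG (Subgroup.zpowers x) hab
      rw [Nat.card_zpowers, hx] at h1
      exact Finset.mem_Ioc.mpr ⟨hp'.pos, h1⟩
    calc m.primeFactors.card ≤ (Finset.Ioc 0 n).card := Finset.card_le_card hsub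
      _ = n := by simp
  have hbase : 1 ≤ n * n.factorial := Nat.one_le_iff_ne_zero.mpr
    (Nat.mul_ne_zero hn.ne' n.factorial_ne_zero)
  calc m = m.factorization.prod (· ^ ·) := (Nat.factorization_prod_pow_eq_self hm0).symm
    _ = ∏ p ∈ m.primeFactors, p ^ m.factorization p := by
        rw [Finsupp.prod, Nat.support_factorization]
    _ ≤ ∏ _p ∈ m.primeFactors, (n * n.factorial) :=
        Finset.prod_le_prod (fun _ _ => Nat.zero_le _) key
    _ = (n * n.factorial) ^ m.primeFactors.card := Finset.prod_const _
    _ ≤ (n * n.factorial) ^ n := Nat.pow_le_pow_right hbase hcard_pf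
end

section
/- There exists a function f : ℕ → ℕ such that for every natural number n the following holds: if G is a finite group such that for every element x of G either the centralizer C_G(x) has order at most n or the index [G : C_G(x)] is at most n, then there is a characteristic subgroup H of G such that the quotient G/H has order at most f(n) and the derived subgroup H' has order at most f(n). -/
/-!
If every centralizer has index at most `n`, the pairs `(a * u, b * v)` with `u ∈ C(b)` and
`v ∈ C(a * u)` all have commutator `⁅a, b⁆`, so each commutator is hit by at least `|G|² / n²`
pairs and there are at most `n²` commutators; Schur's bound then controls `|G'|`.

In general, groups of order at most `n³` are handled by `H = 1`. Otherwise the elements whose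
centralizer has index at most `n` form a characteristic subgroup `K`: if `x, y ∈ K` but `x * y ∉ K`,
then `|G| = |C(x * y)| [G : C(x * y)] ≤ n · n²`. Inside `K` all centralizers have index at most `n`.
Every nontrivial element of `G ⧸ K` is the image of some `x ∉ K`, so its centralizer has order at
most `|C(x)| ≤ n`; hence each Sylow subgroup of `G ⧸ K`, centralizing one of its nontrivial central
elements, has order at most `n`, and `|G ⧸ K|` divides `n!`.
-/

open Subgroup
open scoped commutatorElement Nat

section
variable {G : Type*} [Group G]

theorem commutatorElement_mul_mul_eq {a b u v : G} (hu : Commute u b) (hv : Commute v (a * u)) :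
    ⁅a * u, b * v⁆ = ⁅a, b⁆ := by
  simp only [commutatorElement_def]
  calc a * u * (b * v) * (a * u)⁻¹ * (b * v)⁻¹ = a * u * b * (v * (a * u)⁻¹ * v⁻¹) * b⁻¹ := by
        group
    _ = a * (u * b) * u⁻¹ * a⁻¹ * b⁻¹ := by rw [hv.inv_right.eq]; group
    _ = a * b * a⁻¹ * b⁻¹ := by rw [hu.eq]; group

theorem card_le_mul_card_centralizer {n : ℕ} {x : G}
    (h : (centralizer {x}).index ≤ n) : Nat.card G ≤ n * Nat.card (centralizer {x}) := by
  rw [← (centralizer {x}).card_mul_index, mul_comm]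
  exact Nat.mul_le_mul_right _ h

theorem card_mul_card_le_sq_mul_card_commutatorElement_eq [Finite G] {n : ℕ}
    (h : ∀ x : G, (centralizer {x}).index ≤ n) {c : G} (hc : c ∈ commutatorSet G) :
    Nat.card G * Nat.card G ≤ n ^ 2 * Nat.card {p : G × G // ⁅p.1, p.2⁆ = c} := by
  classical
  have := Fintype.ofFinite G
  obtain ⟨a, b, rfl⟩ := hc
  let shift : (Σ u : centralizer {b}, centralizer {a * u}) → {p : G × G // ⁅p.1, p.2⁆ = ⁅a, b⁆} :=
    fun w => ⟨(a * w.1, b * w.2), commutatorElement_mul_mul_eq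
      (mem_centralizer_singleton_iff.mp w.1.2) (mem_centralizer_singleton_iff.mp w.2.2)⟩
  have hshift : Function.Injective shift := by
    rintro ⟨u, v⟩ ⟨u', v'⟩ huv
    simp only [shift, Subtype.mk.injEq, Prod.mk.injEq, mul_right_inj] at huv
    obtain ⟨hu, hv⟩ := huv
    obtain rfl : u = u' := Subtype.ext hu
    simp [Subtype.ext hv]
  calc Nat.card G * Nat.card G ≤ n * Nat.card (centralizer {b}) * Nat.card G :=
        Nat.mul_le_mul_right _ (card_le_mul_card_centralizer (h b))
    _ = n * ∑ _u : centralizer {b}, Nat.card G := by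
        rw [Finset.sum_const, Finset.card_univ, Nat.card_eq_fintype_card, smul_eq_mul, mul_assoc]
    _ ≤ n * ∑ u : centralizer {b}, n * Nat.card (centralizer {a * u}) :=
        Nat.mul_le_mul_left _ (Finset.sum_le_sum fun u _ => card_le_mul_card_centralizer (h _))
    _ = n ^ 2 * Nat.card (Σ u : centralizer {b}, centralizer {a * u}) := by
        rw [Nat.card_sigma, ← Finset.mul_sum, ← mul_assoc, sq]
    _ ≤ n ^ 2 * Nat.card {p : G × G // ⁅p.1, p.2⁆ = ⁅a, b⁆} :=
        Nat.mul_le_mul_left _ (Nat.card_le_card_of_injective shift hshift)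

theorem card_commutatorSet_le_sq [Finite G] {n : ℕ} (h : ∀ x : G, (centralizer {x}).index ≤ n) :
    Nat.card (commutatorSet G) ≤ n ^ 2 := by
  have := Fintype.ofFinite (commutatorSet G)
  let commutatorOf : G × G → commutatorSet G := fun p => ⟨⁅p.1, p.2⁆, p.1, p.2, rfl⟩
  have hfiber (c : commutatorSet G) :
      Nat.card {p // commutatorOf p = c} = Nat.card {p : G × G // ⁅p.1, p.2⁆ = c} :=
    Nat.card_congr (Equiv.subtypeEquivRight fun _ => Subtype.ext_iff)
  have hpos : 0 < Nat.card G * Nat.card G := Nat.mul_pos Nat.card_pos Nat.card_pos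
  refine Nat.le_of_mul_le_mul_right ?_ hpos
  calc Nat.card (commutatorSet G) * (Nat.card G * Nat.card G)
        = ∑ _c : commutatorSet G, Nat.card G * Nat.card G := by
        rw [Finset.sum_const, Finset.card_univ, Nat.card_eq_fintype_card, smul_eq_mul]
    _ ≤ ∑ c : commutatorSet G, n ^ 2 * Nat.card {p // commutatorOf p = c} :=
        Finset.sum_le_sum fun c _ => (hfiber c).symm ▸
          card_mul_card_le_sq_mul_card_commutatorElement_eq h c.2
    _ = n ^ 2 * (Nat.card G * Nat.card G) := by
        rw [← Finset.mul_sum, ← Nat.card_sigma, Nat.card_congr (Equiv.sigmaFiberEquiv commutatorOf),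
          Nat.card_prod]

/-- Schur's bound for groups with at most `n ^ 2` commutators. -/
def bfcBound (n : ℕ) : ℕ := (Finset.range (n ^ 2 + 1)).sup cardCommutatorBound

theorem card_commutator_le_bfcBound [Finite G] {n : ℕ}
    (h : ∀ x : G, (centralizer {x}).index ≤ n) : Nat.card (commutator G) ≤ bfcBound n :=
  (card_commutator_le_of_finite_commutatorSet G).trans
    (Finset.le_sup (Finset.mem_range.mpr (Nat.lt_succ_of_le (card_commutatorSet_le_sq h))))

theorem index_centralizer_subtype_le {K : Subgroup G} (x : K)
    [(centralizer {(x : G)}).FiniteIndex] :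
    (centralizer {x}).index ≤ (centralizer {(x : G)}).index := by
  have hle : (centralizer {(x : G)}).subgroupOf K ≤ centralizer {x} := fun g hg => by
    rw [mem_subgroupOf, mem_centralizer_singleton_iff] at hg
    exact mem_centralizer_singleton_iff.mpr (Subtype.ext hg)
  calc (centralizer {x}).index ≤ (centralizer {(x : G)}).relIndex K := index_antitone hle
    _ ≤ (centralizer {(x : G)}).index := by
      simpa using relIndex_le_of_le_right le_top (by simpa using FiniteIndex.index_ne_zero)

theorem card_commutator_le_bfcBound_of_forall_mem [Finite G] {n : ℕ} {K : Subgroup G}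
    (h : ∀ x ∈ K, (centralizer {x}).index ≤ n) : Nat.card ↥⁅K, K⁆ ≤ bfcBound n := by
  rw [← map_subtype_commutator, card_map_of_injective K.subtype_injective]
  exact card_commutator_le_bfcBound fun x => (index_centralizer_subtype_le x).trans (h x x.2)

theorem index_centralizer_eq_ncard_orbit (x : G) :
    (centralizer {x}).index = (MulAction.orbit (ConjAct G) x).ncard := by
  rw [centralizer_eq_comap_stabilizer]
  exact (index_comap_of_surjective _ ConjAct.toConjAct.surjective).trans
    (MulAction.index_stabilizer _ _)

theorem card_centralizer_mk_le [Finite G] (N : Subgroup G) [N.Normal] (x : G) :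
    Nat.card (centralizer {(x : G ⧸ N)}) ≤ Nat.card (centralizer {x}) := by
  have hsub : MulAction.orbit (ConjAct G) x ⊆
      QuotientGroup.mk ⁻¹' MulAction.orbit (ConjAct (G ⧸ N)) (x : G ⧸ N) := by
    rintro _ ⟨g, rfl⟩
    exact ⟨ConjAct.toConjAct ((ConjAct.ofConjAct g : G) : G ⧸ N), by simp [ConjAct.smul_def]⟩
  have hclass := Set.ncard_le_ncard hsub (Set.toFinite _)
  rw [← Nat.card_coe_set_eq (QuotientGroup.mk ⁻¹' _), QuotientGroup.card_preimage_mk,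
    Nat.card_coe_set_eq, ← index_centralizer_eq_ncard_orbit,
    ← index_centralizer_eq_ncard_orbit] at hclass
  have hG := (centralizer {x}).card_mul_index
  have hQ := (centralizer {(x : G ⧸ N)}).card_mul_index
  have hGN := card_eq_card_quotient_mul_card_subgroup N
  have hpos : 0 < (centralizer {(x : G ⧸ N)}).index * Nat.card N :=
    Nat.mul_pos (Nat.pos_of_ne_zero index_ne_zero_of_finite) Nat.card_pos
  refine Nat.le_of_mul_le_mul_right ?_ hpos
  calc _ = Nat.card G := by rw [hGN, ← hQ]; ring
    _ ≤ _ := by rw [← hG]; nlinarith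

theorem IsPGroup.exists_ne_one_le_centralizer {p : ℕ} [Fact p.Prime] {P : Subgroup G}
    (hP : IsPGroup p P) [Nontrivial P] [Finite P] : ∃ z : G, z ≠ 1 ∧ P ≤ centralizer {z} := by
  have := hP.center_nontrivial
  obtain ⟨z, hz⟩ := exists_ne (1 : center P)
  refine ⟨z, fun h => hz (Subtype.ext (Subtype.ext h)), fun g hg => ?_⟩
  rw [mem_centralizer_singleton_iff]
  exact congrArg Subtype.val (mem_center_iff.mp z.2 ⟨g, hg⟩)

theorem card_dvd_factorial_of_card_centralizer_le [Finite G] {n : ℕ}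
    (h : ∀ g : G, g ≠ 1 → Nat.card (centralizer {g}) ≤ n) : Nat.card G ∣ n ! := by
  rw [Nat.dvd_iff_prime_pow_dvd_dvd]
  intro p k hp hpk
  have := Fact.mk hp
  obtain ⟨P, hP⟩ := Sylow.exists_subgroup_card_pow_prime p hpk
  rcases k.eq_zero_or_pos with rfl | hk
  · exact one_dvd _
  have : Nontrivial P :=
    Finite.one_lt_card_iff_nontrivial.mp (hP ▸ Nat.one_lt_pow hk.ne' hp.one_lt)
  obtain ⟨z, hz, hPz⟩ := (IsPGroup.of_card hP).exists_ne_one_le_centralizer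
  exact Nat.dvd_factorial (pow_pos hp.pos k) (hP ▸ (card_le_of_le hPz).trans (h z hz))

theorem comap_centralizer_singleton_apply {G' : Type*} [Group G'] {f : G →* G'}
    (hf : Function.Injective f) (x : G) : (centralizer {f x}).comap f = centralizer {x} := by
  ext g
  simp only [mem_comap, mem_centralizer_singleton_iff, ← map_mul, hf.eq_iff]

theorem index_centralizer_mulEquiv_apply {G' : Type*} [Group G'] (e : G ≃* G') (x : G) :
    (centralizer {e x}).index = (centralizer {x}).index := by
  rw [← comap_centralizer_singleton_apply (f := e.toMonoidHom) e.injective x]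
  exact (index_comap_of_surjective _ e.surjective).symm

theorem index_centralizer_mul_le [Finite G] (x y : G) :
    (centralizer {x * y}).index ≤ (centralizer {x}).index * (centralizer {y}).index := by
  have hle : centralizer {x} ⊓ centralizer {y} ≤ centralizer {x * y} := fun g hg => by
    simp only [mem_inf, mem_centralizer_singleton_iff] at hg ⊢
    exact (Commute.mul_right hg.1 hg.2 :)
  exact (index_antitone hle).trans index_inf_le

section BoundedClass
variable [Finite G] {n : ℕ}
  (hG : ∀ x : G, Nat.card (centralizer {x}) ≤ n ∨ (centralizer {x}).index ≤ n)
  (hcard : n ^ 3 < Nat.card G)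

def boundedClassSubgroup : Subgroup G where
  carrier := {x | (centralizer {x}).index ≤ n}
  one_mem' := by
    have h1 : (centralizer {(1 : G)}).index = 1 := by simp
    show _ ≤ n
    rcases hG 1 with h | h
    · exact h1 ▸ Nat.card_pos.trans_le h
    · exact h
  mul_mem' := by
    intro x y hx hy
    by_contra hxy
    have hsmall := (hG (x * y)).resolve_right hxy
    have hindex := (centralizer {x * y}).card_mul_index
    have := (index_centralizer_mul_le x y).trans (Nat.mul_le_mul hx hy)
    nlinarith
  inv_mem' := by
    intro x hx
    have hinv : centralizer {x⁻¹} = centralizer {x} := by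
      ext g
      simp only [mem_centralizer_singleton_iff]
      exact Commute.inv_right_iff
    show _ ≤ n
    rwa [hinv]

instance boundedClassSubgroup.characteristic : (boundedClassSubgroup hG hcard).Characteristic :=
  characteristic_iff_comap_eq.mpr fun e => Subgroup.ext fun x =>
    show (centralizer {e x}).index ≤ n ↔ (centralizer {x}).index ≤ n by
      rw [index_centralizer_mulEquiv_apply]

theorem card_quotient_boundedClassSubgroup_dvd_factorial :
    Nat.card (G ⧸ boundedClassSubgroup hG hcard) ∣ n ! := by
  refine card_dvd_factorial_of_card_centralizer_le fun q hq => ?_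
  obtain ⟨x, rfl⟩ := QuotientGroup.mk_surjective q
  have hx : x ∉ boundedClassSubgroup hG hcard := fun hx => hq ((QuotientGroup.eq_one_iff x).mpr hx)
  exact (card_centralizer_mk_le _ x).trans ((hG x).resolve_right hx)

end BoundedClass

end

/-- There is a function `f : ℕ → ℕ` such that any finite group `G` in which every
centralizer has order at most `n` or index at most `n` has a characteristic subgroup `H`
with `[G : H] ≤ f n` and `|H'| ≤ f n`. -/
theorem finite_group_restricted_centralizers_finiteByAbelianByFinite :
    ∃ f : ℕ → ℕ, ∀ n : ℕ, ∀ (G : Type) [Group G] [Finite G],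
      (∀ x : G, Nat.card (Subgroup.centralizer ({x} : Set G)) ≤ n ∨
        (Subgroup.centralizer ({x} : Set G)).index ≤ n) →
      ∃ H : Subgroup G, H.Characteristic ∧ H.index ≤ f n ∧
        Nat.card ↥⁅H, H⁆ ≤ f n := by
  refine ⟨fun n => n ^ 3 + n ! + bfcBound n, fun n G _ _ hG => ?_⟩
  dsimp only
  have hfact := n.factorial_pos
  by_cases hsmall : Nat.card G ≤ n ^ 3
  · refine ⟨⊥, inferInstance, ?_, ?_⟩
    · rw [index_bot]
      omega
    · rw [commutator_bot_left, card_bot]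
      omega
  · have hcard : n ^ 3 < Nat.card G := not_le.mp hsmall
    refine ⟨boundedClassSubgroup hG hcard, inferInstance, ?_, ?_⟩
    · have := Nat.le_of_dvd n.factorial_pos
        (card_quotient_boundedClassSubgroup_dvd_factorial hG hcard)
      rw [index_eq_card]
      omega
    · have := card_commutator_le_bfcBound_of_forall_mem
        (K := boundedClassSubgroup hG hcard) fun x hx => hx
      omega
end

section
/- Let G be a group, i an involution in G, and N a normal subgroup of G contained in the center of [i,G] and such that i inverts every element of N. Let H be a subgroup of [i,G] containing N such that [H,[i,G]] ⊆ N and such that i inverts H modulo N, i.e., (i·h·i)·h ∈ N for every h ∈ H. Then for every h ∈ H, the element h² commutes with every element of the set i·i^G = {i·(g⁻¹·i·g) : g ∈ G}. -/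
/-- The subgroup `[i, G]` generated by all commutators `i⁻¹ * g⁻¹ * i * g`. -/
def commutatorWith {G : Type*} [Group G] (i : G) : Subgroup G :=
  Subgroup.closure {y : G | ∃ g : G, i⁻¹ * g⁻¹ * i * g = y}

/-!
Let `c = i * i^g` and `n = ⁅h, c⁆ ∈ N`. Both `h` and `c` lie in `[i, G]`, so `n` and
`m = i h i⁻¹ h ∈ N` commute with them. Conjugation by `i` sends `h ↦ m h⁻¹` and `c ↦ c⁻¹`,
hence `n ↦ ⁅m h⁻¹, c⁻¹⁆ = ⁅h⁻¹, c⁻¹⁆ = n`; since `i` also inverts `n`, we get `n ^ 2 = 1`.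
As `n` is central in `⟨h, c⟩`, `⁅h ^ 2, c⁆ = n ^ 2 = 1`.
-/

open scoped commutatorElement

section Commutators

variable {G : Type*} [Group G] {a b m : G}

theorem commutatorElement_sq_left (ha : Commute a ⁅a, b⁆) : ⁅a ^ 2, b⁆ = ⁅a, b⁆ ^ 2 := by
  rw [sq, commutatorElement_mul_left_eq_conj_mul, ha.eq, mul_inv_cancel_right, sq]

theorem commutatorElement_inv_inv (ha : Commute a ⁅a, b⁆) (hb : Commute b ⁅a, b⁆) :
    ⁅a⁻¹, b⁻¹⁆ = ⁅a, b⁆ := by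
  rw [commutatorElement_inv_left, commutatorElement_inv_left, hb.inv_left.eq,
    inv_mul_cancel_right, ha.inv_left.eq, inv_mul_cancel_right]

theorem commutatorElement_mul_left_of_commute (hma : Commute m a) (hmb : Commute m b) :
    ⁅m * a, b⁆ = ⁅a, b⁆ := by
  rw [commutatorElement_mul_left_eq_conj_mul, conjugate_commutatorElement, hma.eq, hmb.eq,
    mul_inv_cancel_right, mul_inv_cancel_right, hmb.commutator_eq, mul_one]

end Commutators

section Involutions

variable {G : Type*} [Group G] {i : G}

theorem conj_mul_eq_inv_of_inv_eq_self {x : G} (hi : i⁻¹ = i) (hx : x⁻¹ = x) :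
    i * (i * x) * i⁻¹ = (i * x)⁻¹ := by
  rw [mul_inv_rev, hx, hi, ← mul_assoc]
  nth_rw 1 [← hi]
  rw [inv_mul_cancel, one_mul]

theorem mul_conj_mem_commutatorWith (hi : i⁻¹ = i) (g : G) :
    i * (g⁻¹ * i * g) ∈ commutatorWith i :=
  Subgroup.subset_closure ⟨g, by rw [hi]; simp only [mul_assoc]⟩

end Involutions

theorem sq_commutes_with_ii_conj_general {G : Type*} [Group G] (i : G)
    (hi2 : i ^ 2 = 1) (N H : Subgroup G)
    (hNcent : ∀ x ∈ N, ∀ y ∈ commutatorWith i, Commute x y)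
    (hNinv : ∀ x ∈ N, i * x * i⁻¹ = x⁻¹)
    (hHsub : H ≤ commutatorWith i)
    (hHcomm : ⁅H, commutatorWith i⁆ ≤ N)
    (hinv : ∀ h ∈ H, i * h * i⁻¹ * h ∈ N) :
    ∀ h ∈ H, ∀ g : G, Commute (h ^ 2) (i * (g⁻¹ * i * g)) := by
  intro h hh g
  have hi : i⁻¹ = i := inv_eq_of_mul_eq_one_right (sq i ▸ hi2)
  set c := i * (g⁻¹ * i * g)
  have hcK : c ∈ commutatorWith i := mul_conj_mem_commutatorWith hi g
  have hhK : h ∈ commutatorWith i := hHsub hh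
  have hnN : ⁅h, c⁆ ∈ N := hHcomm (Subgroup.commutator_mem_commutator hh hcK)
  have hmN := hinv h hh
  have hh_n := (hNcent _ hnN h hhK).symm
  have hc_n := (hNcent _ hnN c hcK).symm
  have hic : i * c * i⁻¹ = c⁻¹ :=
    conj_mul_eq_inv_of_inv_eq_self hi (by simp only [mul_inv_rev, inv_inv, hi, mul_assoc])
  have hih : i * h * i⁻¹ = (i * h * i⁻¹ * h) * h⁻¹ := (mul_inv_cancel_right _ h).symm
  have hn_fixed : i * ⁅h, c⁆ * i⁻¹ = ⁅h, c⁆ := by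
    rw [conjugate_commutatorElement, hih, hic,
      commutatorElement_mul_left_of_commute (hNcent _ hmN _ (inv_mem hhK))
        (hNcent _ hmN _ (inv_mem hcK)),
      commutatorElement_inv_inv hh_n hc_n]
  have hn_sq : ⁅h, c⁆ ^ 2 = 1 := by
    rw [sq, ← inv_eq_iff_mul_eq_one, ← hNinv _ hnN, hn_fixed]
  exact commutatorElement_eq_one_iff_commute.mp (by rw [commutatorElement_sq_left hh_n, hn_sq])

/-- Let `i` be an involution of `G`, `N` a normal subgroup contained in the center of
`[i, G]` and inverted by `i`, and `H` a subgroup of `[i, G]` containing `N` with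
`[H, [i, G]] ≤ N` and such that `i` inverts `H` modulo `N`. Then for every `h ∈ H`, the
element `h ^ 2` commutes with every element of the set `i * i^G`. -/
theorem sq_commutes_with_ii_conj {G : Type*} [Group G] (i : G)
    (hi1 : i ≠ 1) (hi2 : i ^ 2 = 1) (N H : Subgroup G) [N.Normal]
    (hNsub : N ≤ commutatorWith i)
    (hNcent : ∀ x ∈ N, ∀ y ∈ commutatorWith i, Commute x y)
    (hNinv : ∀ x ∈ N, i * x * i⁻¹ = x⁻¹)
    (hNH : N ≤ H) (hHsub : H ≤ commutatorWith i)
    (hHcomm : ⁅H, commutatorWith i⁆ ≤ N)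
    (hinv : ∀ h ∈ H, i * h * i⁻¹ * h ∈ N) :
    ∀ h ∈ H, ∀ g : G, Commute (h ^ 2) (i * (g⁻¹ * i * g)) :=
  sq_commutes_with_ii_conj_general i hi2 N H hNcent hNinv hHsub hHcomm hinv
end
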